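/- arXiv:1107.4145 — 7 statements merged into one kernel-verified Lean document; each statement's English description precedes it below -/
import Mathlib

section
/- If two analytic curve germs γ, σ : (ℝ,0) → (ℝⁿ,0), neither identically zero and with P∘γ, P∘σ not identically zero for some analytic P, are RL-equivalent, then their semigroups coincide: S(γ) = S(σ). In other words, the semigroup of a curve germ is an invariant of RL-equivalence. -/
open Filter

/-- RL-equivalence of analytic curve germs `(ℝ,0) → (ℝⁿ,0)`:
there are an analytic germ `Φ : (ℝⁿ,0) → (ℝⁿ,0)` with invertible differential at `0`
and an analytic reparametrization `τ : (ℝ,0) → (ℝ,0)` with `τ'(0) ≠ 0`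
such that `σ = Φ ∘ γ ∘ τ` near `0`. -/
def RLEquiv {n : ℕ} (γ σ : ℝ → (Fin n → ℝ)) : Prop :=
  ∃ (Φ : (Fin n → ℝ) → (Fin n → ℝ)) (τ : ℝ → ℝ),
    AnalyticAt ℝ Φ 0 ∧ Φ 0 = 0 ∧ Function.Bijective (fderiv ℝ Φ 0) ∧
    AnalyticAt ℝ τ 0 ∧ τ 0 = 0 ∧ deriv τ 0 ≠ 0 ∧
    ∀ᶠ t in nhds (0 : ℝ), σ t = Φ (γ (τ t))

/-- The order of a function germ at `0`: the smallest `i` such that the `i`-th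
Taylor coefficient (equivalently, the `i`-th derivative) at `0` is nonzero. -/
noncomputable def ord (f : ℝ → ℝ) : ℕ := sInf {i : ℕ | iteratedDeriv i f 0 ≠ 0}

/-- The semigroup of a curve germ: all orders `ord (P ∘ γ)` where `P` ranges over
analytic germs `(ℝⁿ,0) → (ℝ,0)` with `P ∘ γ` not identically zero near `0`. -/
def curveSemigroup {n : ℕ} (γ : ℝ → (Fin n → ℝ)) : Set ℕ :=
  {k | ∃ P : (Fin n → ℝ) → ℝ, AnalyticAt ℝ P 0 ∧ P 0 = 0 ∧
      (¬ ∀ᶠ t in nhds (0 : ℝ), P (γ t) = 0) ∧ ord (fun t => P (γ t)) = k}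

/-- The multiplicity of a curve germ: the minimum of the orders of its
not-identically-zero coordinate functions. -/
noncomputable def multC {n : ℕ} (γ : ℝ → (Fin n → ℝ)) : ℕ :=
  sInf {k | ∃ i : Fin n, (¬ ∀ᶠ t in nhds (0 : ℝ), γ t i = 0) ∧ ord (fun t => γ t i) = k}

open Topology

/-!
For an analytic germ `f`, `ord f` is the analytic order of `f` at `0`, and `f` vanishes near `0`
exactly when that order is `⊤`; so `S(γ)` is the set of finite analytic orders of `P ∘ γ`.
A reparametrization `τ` with `τ'(0) ≠ 0` has analytic order one and hence preserves these orders.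
Composing `P` with `Φ`, respectively with its analytic local inverse, turns the functions
`P ∘ γ` into functions `Q ∘ (Φ ∘ γ)` and back.
-/

theorem AnalyticAt.exists_analyticAt_eventually_leftInverse {𝕜 E F : Type*}
    [NontriviallyNormedField 𝕜]
    [NormedAddCommGroup E] [NormedSpace 𝕜 E] [CompleteSpace E]
    [NormedAddCommGroup F] [NormedSpace 𝕜 F] [CompleteSpace F]
    {Φ : E → F} {a : E} (hΦ : AnalyticAt 𝕜 Φ a) (hbij : Function.Bijective (fderiv 𝕜 Φ a)) :
    ∃ Ψ : F → E, AnalyticAt 𝕜 Ψ (Φ a) ∧ ∀ᶠ x in 𝓝 a, Ψ (Φ x) = x := by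
  let i : E ≃L[𝕜] F := .ofBijective (fderiv 𝕜 Φ a)
    (LinearMap.ker_eq_bot_of_injective hbij.1) (LinearMap.range_eq_top_of_surjective _ hbij.2)
  have hi : HasStrictFDerivAt Φ (i : E →L[𝕜] F) a := by
    rw [ContinuousLinearEquiv.coe_ofBijective]
    exact hΦ.hasStrictFDerivAt
  exact ⟨hi.localInverse Φ i a,
    (hi.toOpenPartialHomeomorph Φ).analyticAt_symm' (i := i) hi.mem_toOpenPartialHomeomorph_source
      hΦ (ContinuousLinearEquiv.coe_ofBijective _ _ _).symm,
    hi.eventually_left_inverse⟩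

theorem ord_eq_analyticOrderNatAt {f : ℝ → ℝ} (hf : AnalyticAt ℝ f 0) :
    ord f = analyticOrderNatAt f 0 := by
  -- both sides are the junk value `0` when `f` vanishes near `0`
  unfold ord analyticOrderNatAt
  cases h : analyticOrderAt f 0 using ENat.recTopCoe with
  | top =>
    have hzero : ∀ i, iteratedDeriv i f 0 = 0 := fun i ↦
      (natCast_le_analyticOrderAt_iff_iteratedDeriv_eq_zero hf (n := i + 1)).1 (by simp [h]) i
        i.lt_succ_self
    simp [hzero]
  | coe m =>
    obtain ⟨hlt, hm⟩ := (analyticOrderAt_eq_nat_iff_iteratedDeriv_eq_zero hf).1 h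
    exact le_antisymm (Nat.sInf_le hm)
      (le_csInf ⟨m, hm⟩ fun i hi ↦ not_lt.1 fun him ↦ hi (hlt i him))

theorem curveSemigroup_congr {n : ℕ} {γ σ : ℝ → (Fin n → ℝ)} (h : γ =ᶠ[𝓝 0] σ) :
    curveSemigroup γ = curveSemigroup σ := by
  ext k
  refine exists_congr fun P ↦ and_congr_right fun _ ↦ and_congr_right fun _ ↦ ?_
  have hP : (fun t ↦ P (γ t)) =ᶠ[𝓝 0] fun t ↦ P (σ t) := h.fun_comp P
  have hord : ord (fun t ↦ P (γ t)) = ord (fun t ↦ P (σ t)) := by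
    simp only [ord, hP.iteratedDeriv_eq]
  rw [hord, eventually_congr (hP.mono fun t (ht : P (γ t) = P (σ t)) ↦ by rw [ht])]

theorem mem_curveSemigroup_iff {n : ℕ} {γ : ℝ → (Fin n → ℝ)} (hγ : AnalyticAt ℝ γ 0)
    (hγ0 : γ 0 = 0) {k : ℕ} :
    k ∈ curveSemigroup γ ↔
      ∃ P : (Fin n → ℝ) → ℝ, AnalyticAt ℝ P 0 ∧ P 0 = 0 ∧ analyticOrderAt (P ∘ γ) 0 = k := by
  refine exists_congr fun P ↦ and_congr_right fun hP ↦ and_congr_right fun hP0 ↦ ?_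
  have hPγ : AnalyticAt ℝ (P ∘ γ) 0 := (hγ0 ▸ hP).comp hγ
  rw [← analyticOrderAt_eq_top, ← Function.comp_def, ord_eq_analyticOrderNatAt hPγ,
    analyticOrderNatAt]
  cases analyticOrderAt (P ∘ γ) 0 using ENat.recTopCoe <;> simp

theorem curveSemigroup_comp_of_deriv_ne_zero {n : ℕ} {γ : ℝ → (Fin n → ℝ)} {τ : ℝ → ℝ}
    (hγ : AnalyticAt ℝ γ 0) (hγ0 : γ 0 = 0)
    (hτ : AnalyticAt ℝ τ 0) (hτ0 : τ 0 = 0) (hτ' : deriv τ 0 ≠ 0) :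
    curveSemigroup (γ ∘ τ) = curveSemigroup γ := by
  have hγτ : AnalyticAt ℝ (γ ∘ τ) 0 := (hτ0 ▸ hγ).comp hτ
  ext k
  rw [mem_curveSemigroup_iff hγτ (by simp [hτ0, hγ0]), mem_curveSemigroup_iff hγ hγ0]
  refine exists_congr fun P ↦ and_congr_right fun _ ↦ and_congr_right fun _ ↦ ?_
  rw [← Function.comp_assoc, analyticOrderAt_comp_of_deriv_ne_zero hτ hτ', hτ0]

theorem curveSemigroup_comp_of_bijective_fderiv {n : ℕ} {γ : ℝ → (Fin n → ℝ)}
    {Φ : (Fin n → ℝ) → (Fin n → ℝ)} (hγ : AnalyticAt ℝ γ 0) (hγ0 : γ 0 = 0)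
    (hΦ : AnalyticAt ℝ Φ 0) (hΦ0 : Φ 0 = 0) (hbij : Function.Bijective (fderiv ℝ Φ 0)) :
    curveSemigroup (Φ ∘ γ) = curveSemigroup γ := by
  have hΦγ : AnalyticAt ℝ (Φ ∘ γ) 0 := (hγ0 ▸ hΦ).comp hγ
  obtain ⟨Ψ, hΨ, hΨΦ⟩ := hΦ.exists_analyticAt_eventually_leftInverse hbij
  rw [hΦ0] at hΨ
  have hΨ0 : Ψ 0 = 0 := by simpa [hΦ0] using hΨΦ.self_of_nhds
  ext k
  rw [mem_curveSemigroup_iff hΦγ (by simp [hγ0, hΦ0]), mem_curveSemigroup_iff hγ hγ0]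
  constructor
  · rintro ⟨P, hP, hP0, hord⟩
    exact ⟨P ∘ Φ, (hΦ0 ▸ hP).comp hΦ, by simp [hΦ0, hP0], hord⟩
  · rintro ⟨P, hP, hP0, hord⟩
    refine ⟨P ∘ Ψ, (hΨ0 ▸ hP).comp hΨ, by simp [hΨ0, hP0], ?_⟩
    have hγ' : Tendsto γ (𝓝 0) (𝓝 0) := hγ0 ▸ hγ.continuousAt.tendsto
    have hγΨΦ : (Ψ ∘ Φ) ∘ γ =ᶠ[𝓝 0] γ := hγ'.eventually hΨΦ
    rw [← hord, ← analyticOrderAt_congr (hγΨΦ.fun_comp P)]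
    rfl

theorem curveSemigroup_invariant_of_RLEquiv_general {n : ℕ} (γ σ : ℝ → (Fin n → ℝ))
    (hγa : AnalyticAt ℝ γ 0) (hγ0 : γ 0 = 0)
    (h : RLEquiv γ σ) :
    curveSemigroup γ = curveSemigroup σ := by
  obtain ⟨Φ, τ, hΦ, hΦ0, hbij, hτ, hτ0, hτ', hσ⟩ := h
  calc curveSemigroup γ = curveSemigroup (γ ∘ τ) :=
        (curveSemigroup_comp_of_deriv_ne_zero hγa hγ0 hτ hτ0 hτ').symm
    _ = curveSemigroup (Φ ∘ (γ ∘ τ)) :=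
        (curveSemigroup_comp_of_bijective_fderiv ((hτ0 ▸ hγa).comp hτ) (by simp [hτ0, hγ0])
          hΦ hΦ0 hbij).symm
    _ = curveSemigroup σ := (curveSemigroup_congr hσ).symm

/-- The semigroup of a curve germ is an invariant of RL-equivalence. -/
theorem curveSemigroup_invariant_of_RLEquiv {n : ℕ} (γ σ : ℝ → (Fin n → ℝ))
    (hγa : AnalyticAt ℝ γ 0) (hγ0 : γ 0 = 0)
    (hσa : AnalyticAt ℝ σ 0) (hσ0 : σ 0 = 0)
    (hγnz : ¬ ∀ᶠ t in nhds (0 : ℝ), γ t = 0)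
    (hσnz : ¬ ∀ᶠ t in nhds (0 : ℝ), σ t = 0)
    (hγP : ∃ P : (Fin n → ℝ) → ℝ, AnalyticAt ℝ P 0 ∧ P 0 = 0 ∧
      ¬ ∀ᶠ t in nhds (0 : ℝ), P (γ t) = 0)
    (hσP : ∃ P : (Fin n → ℝ) → ℝ, AnalyticAt ℝ P 0 ∧ P 0 = 0 ∧
      ¬ ∀ᶠ t in nhds (0 : ℝ), P (σ t) = 0)
    (h : RLEquiv γ σ) :
    curveSemigroup γ = curveSemigroup σ :=
  curveSemigroup_invariant_of_RLEquiv_general γ σ hγa hγ0 h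
end

section
/- The curve germs γ₁(t) = (t³, t⁵, t⁷) and γ₂(t) = (t³, t⁵, 0) in ℝ³ are not RL-equivalent. (These are the two inequivalent normal forms of curves realizing points of the class RVV at level three of the Monster tower.) -/
open Filter

/-! If `Φ ∘ γ₁ ∘ τ = γ₂`, the third component `f` of `Φ` vanishes along `γ₁(s) = (s³, s⁵, s⁷)`.
Since `γ₁` is odd, the constant and quadratic Taylor terms of `f` cancel in `f (γ₁ s) - f (-γ₁ s)`,
so `Df(0) (γ₁ s) = O(‖γ₁ s‖³) = O(s⁹)`. But `Df(0) (γ₁ s) = a s³ + b s⁵ + c s⁷` has all its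
exponents below `9`, hence `Df(0) = 0`, and `DΦ(0)` is not surjective. -/

open Asymptotics Topology Polynomial

section Scalar

variable {𝕜 : Type*} [NontriviallyNormedField 𝕜]

theorem isBigO_pow_pow_of_le {m n : ℕ} (h : m ≤ n) :
    (fun s : 𝕜 => s ^ n) =O[𝓝 0] fun s => s ^ m := by
  rcases h.eq_or_lt with rfl | hlt
  · exact isBigO_refl _ _
  · exact (isLittleO_pow_pow hlt).isBigO

theorem eq_zero_of_mul_pow_isBigO_pow_succ {c : 𝕜} {k : ℕ}
    (h : (fun s : 𝕜 => c * s ^ k) =O[𝓝 0] fun s => s ^ (k + 1)) : c = 0 := by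
  by_contra hc
  have hfreq : ∃ᶠ s : 𝕜 in 𝓝 0, s ^ k ≠ 0 :=
    ((eventually_mem_nhdsWithin (a := (0 : 𝕜)) (s := {0}ᶜ)).mono fun _ hs =>
      pow_ne_zero k hs).frequently.filter_mono nhdsWithin_le_nhds
  exact isLittleO_irrefl hfreq
    (((isBigO_const_mul_left_iff hc).1 h).trans_isLittleO (isLittleO_pow_pow k.lt_succ_self))

theorem eq_zero_of_sum_mul_pow_isBigO_pow {n : ℕ} {c : ℕ → 𝕜}
    (h : (fun s : 𝕜 => ∑ i ∈ Finset.range n, c i * s ^ i) =O[𝓝 0] fun s => s ^ n) :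
    ∀ i < n, c i = 0 := by
  induction n with
  | zero => intro i hi; omega
  | succ n ih =>
    simp only [Finset.sum_range_succ] at h
    have hlow : ∀ i < n, c i = 0 := ih <|
      ((h.trans (isBigO_pow_pow_of_le n.le_succ)).sub (isBigO_const_mul_self _ _ _)).congr_left
        fun s => add_sub_cancel_right _ _
    have htop : c n = 0 := eq_zero_of_mul_pow_isBigO_pow_succ <| h.congr_left fun s => by
      rw [Finset.sum_eq_zero fun i hi => by rw [hlow i (Finset.mem_range.1 hi), zero_mul],
        zero_add]
    intro i hi
    rcases (Nat.lt_succ_iff.1 hi).lt_or_eq with hi | rfl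
    exacts [hlow i hi, htop]

theorem Polynomial.eq_zero_of_eval_isBigO_pow {p : 𝕜[X]} {n : ℕ} (hdeg : p.degree < n)
    (h : (fun s : 𝕜 => p.eval s) =O[𝓝 0] fun s => s ^ n) : p = 0 := by
  by_contra hp0
  have hp : p.natDegree < n := (natDegree_lt_iff_degree_lt hp0).2 hdeg
  have hcoeff := eq_zero_of_sum_mul_pow_isBigO_pow (h.congr_left fun s => eval_eq_sum_range' hp s)
  refine hp0 (ext fun i => ?_)
  rcases lt_or_ge i n with hi | hi
  · exact hcoeff i hi
  · exact coeff_eq_zero_of_natDegree_lt (hp.trans_le hi)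

end Scalar

section Analytic

variable {𝕜 E F : Type*} [NontriviallyNormedField 𝕜] [NormedAddCommGroup E] [NormedSpace 𝕜 E]
  [NormedAddCommGroup F] [NormedSpace 𝕜 F]

theorem FormalMultilinearSeries.partialSum_three_sub_partialSum_three_neg
    (p : FormalMultilinearSeries 𝕜 E F) (x : E) :
    p.partialSum 3 x - p.partialSum 3 (-x) = (2 : 𝕜) • p 1 fun _ => x := by
  have hneg : ∀ k, (p k fun _ => -x) = (-1 : 𝕜) ^ k • p k fun _ => x := fun k => by
    simpa using (p k).map_smul_univ (fun _ => (-1 : 𝕜)) fun _ => x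
  simp only [FormalMultilinearSeries.partialSum, Finset.sum_range_succ, Finset.sum_range_zero,
    hneg]
  module

theorem AnalyticAt.isBigO_sub_comp_neg_sub_two_smul_fderiv {f : E → F} (hf : AnalyticAt 𝕜 f 0) :
    (fun x => f x - f (-x) - (2 : 𝕜) • fderiv 𝕜 f 0 x) =O[𝓝 0] fun x => ‖x‖ ^ 3 := by
  obtain ⟨p, hp⟩ := hf
  have htaylor : (fun x => f x - p.partialSum 3 x) =O[𝓝 0] fun x => ‖x‖ ^ 3 := by
    simpa using hp.isBigO_sub_partialSum_pow 3
  have htaylor_neg : (fun x => f (-x) - p.partialSum 3 (-x)) =O[𝓝 0] fun x => ‖x‖ ^ 3 := by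
    simpa [Function.comp_def] using
      htaylor.comp_tendsto (continuous_neg.tendsto' (0 : E) 0 neg_zero)
  refine (htaylor.sub htaylor_neg).congr_left fun x => ?_
  have hsnoc : (Fin.snoc 0 x : Fin 1 → E) = fun _ => x := funext (Fin.forall_fin_one.2 rfl)
  rw [hp.fderiv_eq, continuousMultilinearCurryFin1_apply, hsnoc,
    ← p.partialSum_three_sub_partialSum_three_neg]
  abel

theorem AnalyticAt.isBigO_fderiv_comp_of_odd_of_eventually_eq_zero [CharZero 𝕜] {f : E → F}
    (hf : AnalyticAt 𝕜 f 0) {γ : 𝕜 → E} (hγ : Tendsto γ (𝓝 0) (𝓝 0))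
    (hodd : ∀ s, γ (-s) = -γ s) (hzero : ∀ᶠ s in 𝓝 0, f (γ s) = 0) :
    (fun s => fderiv 𝕜 f 0 (γ s)) =O[𝓝 0] fun s => ‖γ s‖ ^ 3 := by
  have hzero_neg : ∀ᶠ s in 𝓝 0, f (-γ s) = 0 := by
    filter_upwards [(continuous_neg.tendsto' (0 : 𝕜) 0 neg_zero).eventually hzero] with s hs
    rwa [← hodd]
  have h := (hf.isBigO_sub_comp_neg_sub_two_smul_fderiv.comp_tendsto hγ).neg_left.const_smul_left
    (2⁻¹ : 𝕜)
  refine h.congr' ?_ EventuallyEq.rfl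
  filter_upwards [hzero, hzero_neg] with s h₁ h₂
  simp [h₁, h₂, smul_smul]

end Analytic

section MonomialCurve

variable {𝕜 ι : Type*} [NontriviallyNormedField 𝕜]

def monomialCurve (k : ι → ℕ) (s : 𝕜) : ι → 𝕜 := fun i => s ^ k i

theorem monomialCurve_neg {k : ι → ℕ} (hk : ∀ i, Odd (k i)) (s : 𝕜) :
    monomialCurve k (-s) = -monomialCurve k s :=
  funext fun i => (hk i).neg_pow s

theorem isBigO_monomialCurve [Fintype ι] {k : ι → ℕ} {m : ℕ} (hm : ∀ i, m ≤ k i) :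
    monomialCurve k =O[𝓝 (0 : 𝕜)] fun s => s ^ m :=
  isBigO_pi.2 fun i => isBigO_pow_pow_of_le (hm i)

theorem ContinuousLinearMap.eq_zero_of_comp_monomialCurve_isBigO_pow [Fintype ι] [DecidableEq ι]
    {k : ι → ℕ} (hk : Function.Injective k) {n : ℕ} (hkn : ∀ i, k i < n)
    (L : (ι → 𝕜) →L[𝕜] 𝕜) (h : (fun s : 𝕜 => L (monomialCurve k s)) =O[𝓝 0] fun s => s ^ n) :
    L = 0 := by
  set p : 𝕜[X] := ∑ i, C (L (Pi.single i 1)) * X ^ k i with hp_def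
  have heval : ∀ s, p.eval s = L (monomialCurve k s) := fun s => by
    rw [pi_eq_sum_univ' (monomialCurve k s), map_sum]
    simp only [monomialCurve, hp_def, eval_finsetSum, eval_mul, eval_C, eval_pow, eval_X, map_smul,
      smul_eq_mul, mul_comm]
  have hdeg : p.degree < n := (degree_sum_le _ _).trans_lt <|
    (Finset.sup_lt_iff (WithBot.bot_lt_coe n)).2 fun i _ =>
      (degree_C_mul_X_pow_le _ _).trans_lt (WithBot.coe_lt_coe.2 (hkn i))
  have hp : p = 0 :=
    Polynomial.eq_zero_of_eval_isBigO_pow hdeg (h.congr_left fun s => (heval s).symm)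
  have hLe : ∀ j, L (Pi.single j 1) = 0 := fun j => by
    simpa [p, finsetSum_coeff, coeff_C_mul_X_pow, hk.eq_iff] using congrArg (coeff · (k j)) hp
  ext x
  rw [pi_eq_sum_univ' x, map_sum]
  simp [hLe]

end MonomialCurve

/-- The curves `(t³, t⁵, t⁷)` and `(t³, t⁵, 0)` are not RL-equivalent. -/
theorem not_RLEquiv_t3_t5_t7_and_t3_t5_0 :
    ¬ RLEquiv (fun t : ℝ => ![t ^ 3, t ^ 5, t ^ 7])
      (fun t : ℝ => ![t ^ 3, t ^ 5, 0]) := by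
  rintro ⟨Φ, τ, hΦ, -, hbij, hτ, hτ0, hτ', heq⟩
  set k : Fin 3 → ℕ := ![3, 5, 7]
  have hγ : (fun t : ℝ => ![t ^ 3, t ^ 5, t ^ 7]) = monomialCurve k := by
    funext t i; fin_cases i <;> rfl
  rw [hγ] at heq
  have hτ_nhds : map τ (𝓝 0) = 𝓝 0 := by
    simpa [hτ0] using (hτ.contDiffAt.hasStrictDerivAt one_ne_zero).map_nhds_eq hτ'
  have hzero : ∀ᶠ s in 𝓝 0, Φ (monomialCurve k s) 2 = 0 := by
    rw [← hτ_nhds, eventually_map]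
    filter_upwards [heq] with t ht
    simpa using (congrFun ht 2).symm
  have hk3 : monomialCurve k =O[𝓝 0] fun s : ℝ => s ^ 3 :=
    isBigO_monomialCurve (by decide)
  have hL := (analyticAt_pi_iff.1 hΦ 2).isBigO_fderiv_comp_of_odd_of_eventually_eq_zero
    (hk3.trans_tendsto (by simpa using (continuous_pow 3).tendsto (0 : ℝ)))
    (monomialCurve_neg (by decide)) hzero
  have hL0 := ContinuousLinearMap.eq_zero_of_comp_monomialCurve_isBigO_pow (n := 9) (by decide)
    (by decide) _ (hL.trans (hk3.norm_left.pow 3 |>.congr_right fun s => by ring))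
  rw [fderiv_apply hΦ.differentiableAt] at hL0
  obtain ⟨v, hv⟩ := hbij.surjective (Pi.single 2 1)
  simpa [hv] using congrArg (· v) hL0
end

section
/- The curve γ₁(t) = (t³, t⁵, t⁷) does not lie in any embedded analytic surface germ through the origin in ℝ³: there is no real-analytic function f defined on a neighborhood of 0 in ℝ³ with f(0) = 0 and nonzero gradient ∇f(0) ≠ 0 such that f(t³, t⁵, t⁷) = 0 for all t in a neighborhood of 0. In particular, γ₁ is not a planar curve germ. -/
/-!
Since `γ₁(-t) = -γ₁(t)`, the function `f` vanishes at both `γ₁(t)` and `-γ₁(t)`; in the odd part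
`f(y) - f(-y) = 2 Df(0) y + O(‖y‖³)` of an analytic function the constant and quadratic Taylor terms
cancel, so `Df(0)(γ₁(t)) = O(‖γ₁(t)‖³) = O(t⁹)`. But `Df(0)(γ₁(t)) = a t³ + b t⁵ + c t⁷` with
`(a, b, c) = ∇f(0)`, and a polynomial of degree less than `9` that is `O(t⁹)` at `0` is zero.
-/

open Filter Topology Asymptotics Polynomial

theorem Polynomial.eq_zero_of_isBigO_pow {𝕜 : Type*} [NontriviallyNormedField 𝕜] {P : 𝕜[X]}
    {n : ℕ} (hdeg : P.natDegree < n) (h : (fun t => P.eval t) =O[𝓝 0] fun t => t ^ n) :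
    P = 0 := by
  by_contra hP
  obtain ⟨Q, hPQ, hQ⟩ := P.exists_eq_pow_rootMultiplicity_mul_and_not_dvd hP 0
  set m := P.rootMultiplicity 0
  have hm : m < n := by
    have := natDegree_le_of_dvd (P.pow_rootMultiplicity_dvd 0) hP
    rw [natDegree_pow, natDegree_X_sub_C, mul_one] at this
    omega
  have hQ0 : Q.eval 0 ≠ 0 := by simpa [X_dvd_iff, coeff_zero_eq_eval_zero] using hQ
  have hQinv : (fun t => (Q.eval t)⁻¹) =O[𝓝 0] fun _ => (1 : 𝕜) :=
    ((Q.continuous.tendsto 0).inv₀ hQ0).isBigO_one 𝕜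
  -- `t ^ m = P(t) / Q(t) = O(t ^ n) = o(t ^ m)` because `Q(0) ≠ 0`
  have hself : (fun t : 𝕜 => t ^ m) =o[𝓝 0] fun t => t ^ m := by
    refine ((h.mul hQinv).trans_isLittleO ?_).congr' ?_ .rfl
    · simpa using isLittleO_pow_pow hm
    · filter_upwards [(Q.continuous.tendsto 0).eventually_ne hQ0] with t ht
      simp [hPQ, ht]
  refine isLittleO_irrefl ?_ hself
  exact ((eventually_mem_nhdsWithin (s := {0}ᶜ)).mono fun t ht => pow_ne_zero m ht).frequently
    |>.filter_mono nhdsWithin_le_nhds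

section OddPart

variable {𝕜 E F : Type*} [NontriviallyNormedField 𝕜]
  [NormedAddCommGroup E] [NormedSpace 𝕜 E] [NormedAddCommGroup F] [NormedSpace 𝕜 F]

theorem FormalMultilinearSeries.partialSum_three_sub_neg (p : FormalMultilinearSeries 𝕜 E F)
    (y : E) : p.partialSum 3 y - p.partialSum 3 (-y) = (2 : 𝕜) • p 1 (fun _ => y) := by
  have hneg (k : ℕ) : p k (fun _ => -y) = (-1 : 𝕜) ^ k • p k (fun _ => y) := by
    simpa using (p k).map_smul_univ (fun _ => (-1 : 𝕜)) (fun _ => y)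
  simp only [FormalMultilinearSeries.partialSum, Finset.sum_range_succ, Finset.sum_range_zero,
    hneg]
  module

theorem AnalyticAt.isBigO_sub_sub_fderiv {f : E → F} {x : E} (hf : AnalyticAt 𝕜 f x) :
    (fun y => f (x + y) - f (x - y) - (2 : 𝕜) • fderiv 𝕜 f x y) =O[𝓝 0] fun y => ‖y‖ ^ 3 := by
  obtain ⟨p, hp⟩ := hf
  have h := hp.isBigO_sub_partialSum_pow 3
  have hneg : (fun y => f (x - y) - p.partialSum 3 (-y)) =O[𝓝 0] fun y => ‖y‖ ^ 3 := by
    simpa [Function.comp_def, ← sub_eq_add_neg] using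
      h.comp_tendsto (continuous_neg.tendsto' (0 : E) 0 neg_zero)
  refine (h.sub hneg).congr (fun y => ?_) fun _ => rfl
  have hfderiv : fderiv 𝕜 f x y = p 1 (fun _ => y) := by
    rw [hp.fderiv_eq, continuousMultilinearCurryFin1_apply]
    congr 1
  rw [hfderiv, ← p.partialSum_three_sub_neg]
  abel

theorem AnalyticAt.isBigO_fderiv_comp_of_odd [CharZero 𝕜] {f : E → F} {α : Type*}
    {l : Filter α} {γ : α → E} (hf : AnalyticAt 𝕜 f 0) (hγ : Tendsto γ l (𝓝 0))
    (hfγ : ∀ᶠ t in l, f (γ t) = f (-γ t)) :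
    (fun t => fderiv 𝕜 f 0 (γ t)) =O[l] fun t => ‖γ t‖ ^ 3 := by
  rw [← isBigO_const_smul_left (two_ne_zero' 𝕜)]
  refine (hf.isBigO_sub_sub_fderiv.comp_tendsto hγ).neg_left.congr' ?_ .rfl
  filter_upwards [hfγ] with t ht
  simp [ht, sub_eq_add_neg]

end OddPart

section Curve357

variable {𝕜 : Type*} [NontriviallyNormedField 𝕜]

def curve357 (t : 𝕜) : Fin 3 → 𝕜 := ![t ^ 3, t ^ 5, t ^ 7]

theorem curve357_neg (t : 𝕜) : curve357 (-t) = -curve357 t := by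
  ext i; fin_cases i <;> simp [curve357] <;> ring

theorem isBigO_curve357 : (curve357 : 𝕜 → Fin 3 → 𝕜) =O[𝓝 0] fun t => t ^ 3 := by
  rw [isBigO_pi]
  intro i; fin_cases i
  · exact isBigO_refl _ _
  · exact (isLittleO_pow_pow (by norm_num : 3 < 5)).isBigO
  · exact (isLittleO_pow_pow (by norm_num : 3 < 7)).isBigO

theorem ContinuousLinearMap.eq_zero_of_isBigO_comp_curve357 (L : (Fin 3 → 𝕜) →L[𝕜] 𝕜)
    (h : (fun t => L (curve357 t)) =O[𝓝 0] fun t => t ^ 9) : L = 0 := by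
  set e : Fin 3 → 𝕜 := fun i => L fun j => if i = j then 1 else 0
  have hsum (v : Fin 3 → 𝕜) : L v = v 0 * e 0 + v 1 * e 1 + v 2 * e 2 := by
    simpa [Fin.sum_univ_three] using L.toLinearMap.pi_apply_eq_sum_univ v
  have hP : C (e 0) * X ^ 3 + C (e 1) * X ^ 5 + C (e 2) * X ^ 7 = 0 := by
    refine eq_zero_of_isBigO_pow ?_ (h.congr_left fun t => ?_)
    · exact lt_of_le_of_lt (b := 7) (by compute_degree!) (by norm_num)
    · simp [hsum, curve357]; ring
  have he (i : Fin 3) : e i = 0 := by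
    fin_cases i
    · simpa using congrArg (coeff · 3) hP
    · simpa using congrArg (coeff · 5) hP
    · simpa using congrArg (coeff · 7) hP
  ext v
  simp [hsum, he]

end Curve357

/-- The curve `(t³, t⁵, t⁷)` does not lie in any embedded analytic surface germ
through the origin in `ℝ³`. -/
theorem t3_t5_t7_not_planar :
    ¬ ∃ f : (Fin 3 → ℝ) → ℝ, AnalyticAt ℝ f 0 ∧ f 0 = 0 ∧ fderiv ℝ f 0 ≠ 0 ∧
      ∀ᶠ t in nhds (0 : ℝ), f ![t ^ 3, t ^ 5, t ^ 7] = 0 := by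
  rintro ⟨f, hf, -, hL, hcurve⟩
  have hodd : ∀ᶠ t in 𝓝 (0 : ℝ), f (curve357 t) = f (-curve357 t) := by
    filter_upwards [hcurve, (continuous_neg.tendsto' (0 : ℝ) 0 neg_zero).eventually hcurve]
      with t ht hnegt
    rw [← curve357_neg]
    exact ht.trans hnegt.symm
  have hγ : Tendsto (curve357 : ℝ → Fin 3 → ℝ) (𝓝 0) (𝓝 0) :=
    isBigO_curve357.trans_tendsto ((continuous_pow 3).tendsto' 0 0 (zero_pow three_ne_zero))
  have hnorm : (fun t => ‖curve357 t‖ ^ 3) =O[𝓝 0] fun t : ℝ => t ^ 9 := by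
    simpa [← pow_mul] using (isBigO_curve357 (𝕜 := ℝ)).norm_left.pow 3
  exact hL <| (fderiv ℝ f 0).eq_zero_of_isBigO_comp_curve357 <|
    (hf.isBigO_fderiv_comp_of_odd hγ hodd).trans hnorm
end

section
/- For every real number α, the curve germ t ↦ (t³ + αt⁴, t⁵, t⁷) in ℝ³ is RL-equivalent to the curve germ t ↦ (t³, t⁵, t⁷). -/
open Filter

/-!
Reparametrize by `t = s + α s² / 3`, so that `t³ = s³ + α s⁴ + O(s⁵)`. Along the curve
`(x, y, z) = (s³ + α s⁴, s⁵, s⁷)` each `sⁿ` with `n ≥ 5` is the leading term of a monomial in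
`x, y, z` (every such `n` lies in the semigroup `⟨3, 5, 7⟩`), and for `n ≥ 24` already of a
monomial in `y, z` alone, which has no higher terms. Eliminating powers of `s` from the lowest
upward therefore writes the polynomials `t³, t⁵, t⁷` in `s` exactly as polynomials in `x, y, z`,
with unitriangular linear part.
-/

open Topology
open scoped ContDiff

namespace RLEquivT3

/-- The root of `s + c * s ^ 2 = t` near `0`, in a form that stays analytic at `c = 0`. -/
noncomputable def quadInv (c t : ℝ) : ℝ := 2 * t / (1 + √(1 + 4 * c * t))

lemma quadInv_add_mul_sq {c t : ℝ} (h : 0 ≤ 1 + 4 * c * t) :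
    quadInv c t + c * quadInv c t ^ 2 = t := by
  unfold quadInv
  set r := √(1 + 4 * c * t)
  have hr : r ^ 2 = 1 + 4 * c * t := Real.sq_sqrt h
  have hpos : 0 < 1 + r := by positivity
  field_simp
  linear_combination (-t) * hr

lemma eventually_quadInv_add_mul_sq (c : ℝ) :
    ∀ᶠ t in 𝓝 0, quadInv c t + c * quadInv c t ^ 2 = t := by
  have h : Tendsto (fun t : ℝ => 1 + 4 * c * t) (𝓝 0) (𝓝 (1 + 4 * c * 0)) :=
    (by fun_prop : Continuous fun t : ℝ => 1 + 4 * c * t).tendsto 0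
  filter_upwards [h.eventually_const_lt (by norm_num : (0 : ℝ) < _)] with t ht
  exact quadInv_add_mul_sq ht.le

lemma contDiffAt_quadInv (c : ℝ) : ContDiffAt ℝ ω (quadInv c) 0 := by
  unfold quadInv
  fun_prop (disch := norm_num)

lemma hasDerivAt_quadInv (c : ℝ) : HasDerivAt (quadInv c) 1 0 := by
  have hroot : HasDerivAt (fun t => √(1 + 4 * c * t)) (4 * c / 2) 0 := by
    simpa using (((hasDerivAt_id (0 : ℝ)).const_mul (4 * c)).const_add 1).sqrt (by norm_num)
  have h := ((hasDerivAt_id (0 : ℝ)).const_mul 2).fun_div (hroot.const_add 1) (by norm_num)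
  unfold quadInv
  exact h.congr_deriv (by norm_num)

noncomputable def coordChange (α : ℝ) (v : Fin 3 → ℝ) : Fin 3 → ℝ :=
  let x := v 0
  let y := v 1
  let z := v 2
  ![x + α ^ 2 / 3 * y - 2 * α ^ 4 / 27 * z + α ^ 3 / 27 * x ^ 2 - α ^ 5 / 27 * x * y
      + α ^ 6 / 27 * x ^ 3 - α ^ 7 / 9 * y ^ 2 - α ^ 8 / 9 * x ^ 2 * y + 5 * α ^ 9 / 27 * y * z
      + α ^ 10 / 9 * x * y ^ 2 - α ^ 11 / 9 * z ^ 2,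
    y - 20 * α ^ 2 / 9 * z + 5 * α / 3 * x ^ 2 - 35 * α ^ 3 / 27 * x * y
      + 110 * α ^ 4 / 81 * x ^ 3 - 989 * α ^ 5 / 243 * y ^ 2 - 110 * α ^ 6 / 27 * x ^ 2 * y
      + 550 * α ^ 7 / 81 * y * z + 110 * α ^ 8 / 27 * x * y ^ 2 - 110 * α ^ 9 / 27 * z ^ 2,
    z + 7 * α / 3 * x * y + 35 * α ^ 3 / 27 * y ^ 2 + 35 * α ^ 4 / 81 * x ^ 2 * y
      - 7 * α ^ 5 / 9 * y * z - 308 * α ^ 6 / 729 * x * y ^ 2 + 925 * α ^ 7 / 2187 * z ^ 2]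

lemma coordChange_curve (α s : ℝ) :
    coordChange α ![s ^ 3 + α * s ^ 4, s ^ 5, s ^ 7] =
      ![(s + α / 3 * s ^ 2) ^ 3, (s + α / 3 * s ^ 2) ^ 5, (s + α / 3 * s ^ 2) ^ 7] := by
  ext i
  fin_cases i <;> simp [coordChange] <;> ring

lemma coordChange_zero (α : ℝ) : coordChange α 0 = 0 := by
  ext i
  fin_cases i <;> simp [coordChange]

lemma contDiff_coordChange (α : ℝ) : ContDiff ℝ ω (coordChange α) :=
  contDiff_pi.2 fun i => by fin_cases i <;> simp [coordChange] <;> fun_prop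

lemma fderiv_coordChange_zero_apply (α : ℝ) (w : Fin 3 → ℝ) :
    fderiv ℝ (coordChange α) 0 w =
      ![w 0 + α ^ 2 / 3 * w 1 - 2 * α ^ 4 / 27 * w 2, w 1 - 20 * α ^ 2 / 9 * w 2, w 2] := by
  ext i
  rw [show fderiv ℝ (coordChange α) 0 w i = (.proj i ∘L fderiv ℝ (coordChange α) 0) w from rfl,
    ← fderiv_apply ((contDiff_coordChange α).differentiable (by simp) 0)]
  fin_cases i <;>
    simp (disch := fun_prop) [coordChange, fderiv_fun_add, fderiv_fun_sub, fderiv_const_mul,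
      fderiv_fun_mul, fderiv_fun_pow, fderiv_apply] <;> ring

lemma bijective_fderiv_coordChange_zero (α : ℝ) :
    Function.Bijective (fderiv ℝ (coordChange α) 0) := by
  have hinj : Function.Injective (fderiv ℝ (coordChange α) 0) := by
    refine (injective_iff_map_eq_zero _).2 fun w hw => ?_
    have h := congrFun ((fderiv_coordChange_zero_apply α w).symm.trans hw)
    have h2 : w 2 = 0 := by simpa using h 2
    have h1 : w 1 = 0 := by simpa [h2] using h 1
    have h0 : w 0 = 0 := by simpa [h1, h2] using h 0
    ext i
    fin_cases i <;> assumption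
  exact ⟨hinj, LinearMap.injective_iff_surjective.1 hinj⟩

end RLEquivT3

open RLEquivT3

/-- For every `α`, the curve `(t³ + αt⁴, t⁵, t⁷)` is RL-equivalent to `(t³, t⁵, t⁷)`. -/
theorem RLEquiv_t3_alpha_t4 (α : ℝ) :
    RLEquiv (fun t : ℝ => ![t ^ 3 + α * t ^ 4, t ^ 5, t ^ 7])
      (fun t : ℝ => ![t ^ 3, t ^ 5, t ^ 7]) := by
  refine ⟨coordChange α, quadInv (α / 3), (contDiff_coordChange α).contDiffAt.analyticAt,
    coordChange_zero α, bijective_fderiv_coordChange_zero α,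
    (contDiffAt_quadInv _).analyticAt, by simp [quadInv], by simp [(hasDerivAt_quadInv _).deriv],
    ?_⟩
  filter_upwards [eventually_quadInv_add_mul_sq (α / 3)] with t ht
  rw [coordChange_curve, ht]
end

section
/- The curve germ t ↦ (t³, t⁵ + t⁷, 0) in ℝ³ is RL-equivalent to the curve germ t ↦ (t³, t⁵, 0). -/
open Filter

/-!
Reparametrize by `τ = t - t³/5 - t⁵/25`. Its `t³`-coefficient kills the `t⁷` term of `τ⁵ + τ⁷`
and its `t⁵`-coefficient kills the `t⁷` term of `τ³`, so apart from `t³ - (3/5)t⁵` in `τ³` and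
`t⁵` in `τ⁵ + τ⁷`, only odd powers `tᵏ` with `k ≥ 9` remain. These lie in the semigroup `⟨3, 5⟩`,
i.e. are monomials in `x = t³`, `y = t⁵`. This gives a polynomial map `Ψ` with invertible
linear part sending `(t³, t⁵, 0)` to `(τ³, τ⁵ + τ⁷, 0)`; its analytic local inverse is `Φ`.
-/

open Topology
open scoped ContDiff

section
variable {𝕜 E F : Type*} [NontriviallyNormedField 𝕜] [NormedAddCommGroup E] [NormedSpace 𝕜 E]
  [NormedAddCommGroup F] [NormedSpace 𝕜 F]

@[fun_prop]
theorem ContDiff.matrixVecCons {n : WithTop ℕ∞} {m : ℕ} {f : E → F} {g : E → Fin m → F}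
    (hf : ContDiff 𝕜 n f) (hg : ContDiff 𝕜 n g) :
    ContDiff 𝕜 n (fun x => Matrix.vecCons (f x) (g x)) :=
  contDiff_pi.2 fun i => Fin.cases (by simpa using hf) (fun j => by simpa using contDiff_pi.1 hg j) i

theorem hasFDerivAt_smul_of_eq_zero {f : E → 𝕜} {g : E → F} {x : E}
    (hf : DifferentiableAt 𝕜 f x) (hg : DifferentiableAt 𝕜 g x) (hfx : f x = 0) (hgx : g x = 0) :
    HasFDerivAt (fun p => f p • g p) (0 : E →L[𝕜] F) x := by
  simpa [hfx, hgx] using hf.hasFDerivAt.fun_smul hg.hasFDerivAt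

end

theorem rlEquiv_of_comp_eq_comp {n : ℕ} {γ σ : ℝ → (Fin n → ℝ)} {Ψ : (Fin n → ℝ) → (Fin n → ℝ)}
    {τ : ℝ → ℝ} (hΨ : AnalyticAt ℝ Ψ 0) (hΨ0 : Ψ 0 = 0) (hdΨ : Function.Bijective (fderiv ℝ Ψ 0))
    (hτ : AnalyticAt ℝ τ 0) (hτ0 : τ 0 = 0) (hdτ : deriv τ 0 ≠ 0)
    (hσ : ContinuousAt σ 0) (hσ0 : σ 0 = 0) (h : ∀ᶠ t in 𝓝 0, Ψ (σ t) = γ (τ t)) :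
    RLEquiv γ σ := by
  set e := ContinuousLinearEquiv.ofBijective (fderiv ℝ Ψ 0)
    (LinearMap.ker_eq_bot.2 hdΨ.1) (LinearMap.range_eq_top.2 hdΨ.2)
  have he : (e : (Fin n → ℝ) →L[ℝ] (Fin n → ℝ)) = fderiv ℝ Ψ 0 :=
    ContinuousLinearEquiv.coe_ofBijective ..
  have hs : HasStrictFDerivAt Ψ (e : (Fin n → ℝ) →L[ℝ] (Fin n → ℝ)) 0 :=
    he ▸ hΨ.hasStrictFDerivAt
  have hinv := hs.to_localInverse
  have hΦ0 := hs.localInverse_apply_image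
  rw [hΨ0] at hinv hΦ0
  refine ⟨hs.localInverse Ψ e 0, τ, ?_, hΦ0, ?_, hτ, hτ0, hdτ, ?_⟩
  · have := (hs.toOpenPartialHomeomorph Ψ).analyticAt_symm' (i := e)
      hs.mem_toOpenPartialHomeomorph_source (by simpa using hΨ) (by simpa using he.symm)
    simpa [hΨ0, hs.localInverse_def] using this
  · rw [hinv.hasFDerivAt.fderiv]
    exact e.symm.bijective
  · have hσ' : Tendsto σ (𝓝 0) (𝓝 0) := hσ0 ▸ hσ.tendsto
    filter_upwards [h, hσ'.eventually hs.eventually_left_inverse] with t ht hσt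
    rw [← ht, hσt]

noncomputable section

def reparam (t : ℝ) : ℝ := t - t ^ 3 / 5 - t ^ 5 / 25

theorem hasDerivAt_reparam : HasDerivAt reparam 1 0 :=
  (((hasDerivAt_id' 0).fun_sub ((hasDerivAt_pow 3 0).div_const 5)).fun_sub
    ((hasDerivAt_pow 5 0).div_const 25)).congr_deriv (by norm_num)

def shear : (Fin 3 → ℝ) ≃L[ℝ] (Fin 3 → ℝ) := LinearEquiv.toContinuousLinearEquiv
  { toFun p := ![p 0 - 3 / 5 * p 1, p 1, p 2]
    invFun p := ![p 0 + 3 / 5 * p 1, p 1, p 2]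
    map_add' p q := by ext i; fin_cases i <;> simp; ring
    map_smul' c p := by ext i; fin_cases i <;> simp; ring
    left_inv p := by ext i; fin_cases i <;> simp
    right_inv p := by ext i; fin_cases i <;> simp }

/-- With `x = t³`, `y = t⁵`, each monomial `tᵏ` (`k ≥ 9`) of `reparam t ^ 3` and of
`reparam t ^ 5 + reparam t ^ 7` is written as `x · xᵃ yᵇ` with `b ≤ 2`. -/
def higherOrderTerms (p : Fin 3 → ℝ) : Fin 3 → ℝ :=
  let x := p 0
  let y := p 1
  ![x ^ 2 / 25 - 3 / 3125 * y ^ 2 - x ^ 4 / 15625,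
    -6 / 5 * x ^ 2 + 16 / 25 * x * y + 4 / 125 * y ^ 2 - 256 / 3125 * x ^ 4
      + 17 / 3125 * x ^ 3 * y + 79 / 15625 * x ^ 2 * y ^ 2 - 6 / 15625 * x ^ 6
      - 78 / 390625 * x ^ 5 * y + 69 / 9765625 * x ^ 4 * y ^ 2 + 49 / 9765625 * x ^ 8
      + 7 / 48828125 * x ^ 7 * y - 14 / 244140625 * x ^ 6 * y ^ 2
      - 7 / 1220703125 * x ^ 10 - 1 / 6103515625 * x ^ 9 * y,
    0]

theorem contDiff_higherOrderTerms : ContDiff ℝ ω higherOrderTerms := by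
  unfold higherOrderTerms; fun_prop

theorem higherOrderTerms_zero : higherOrderTerms 0 = 0 := by
  ext i; fin_cases i <;> simp [higherOrderTerms]

def perturbingMap (p : Fin 3 → ℝ) : Fin 3 → ℝ := shear p + p 0 • higherOrderTerms p

theorem perturbingMap_monomialCurve (t : ℝ) :
    perturbingMap ![t ^ 3, t ^ 5, 0] = ![reparam t ^ 3, reparam t ^ 5 + reparam t ^ 7, 0] := by
  ext i; fin_cases i <;> simp [perturbingMap, shear, higherOrderTerms, reparam] <;> ring

theorem perturbingMap_zero : perturbingMap 0 = 0 := by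
  simp [perturbingMap]

theorem analyticAt_perturbingMap : AnalyticAt ℝ perturbingMap 0 :=
  ContDiffAt.analyticAt <| by
    have := contDiff_higherOrderTerms
    unfold perturbingMap; fun_prop

theorem hasFDerivAt_perturbingMap :
    HasFDerivAt perturbingMap (shear : (Fin 3 → ℝ) →L[ℝ] (Fin 3 → ℝ)) 0 := by
  have h := shear.hasFDerivAt.fun_add <| hasFDerivAt_smul_of_eq_zero (differentiableAt_apply 0 0)
    (contDiff_higherOrderTerms.differentiable (by simp) 0) rfl higherOrderTerms_zero
  rwa [add_zero] at h

end

/-- The curve `(t³, t⁵ + t⁷, 0)` is RL-equivalent to `(t³, t⁵, 0)`. -/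
theorem RLEquiv_t3_t5_plus_t7 :
    RLEquiv (fun t : ℝ => ![t ^ 3, t ^ 5 + t ^ 7, 0])
      (fun t : ℝ => ![t ^ 3, t ^ 5, 0]) := by
  exact rlEquiv_of_comp_eq_comp (τ := reparam) analyticAt_perturbingMap perturbingMap_zero
    (hasFDerivAt_perturbingMap.fderiv ▸ shear.bijective)
    (ContDiffAt.analyticAt (by unfold reparam; fun_prop)) (by simp [reparam])
    (hasDerivAt_reparam.deriv ▸ one_ne_zero) (by fun_prop) (by simp)
    (.of_forall perturbingMap_monomialCurve)
end

section
/- For all real numbers α₁, α₂, β, the curve germ t ↦ (t³ + α₁t⁴ + α₂t⁷, t⁵ + βt⁷, 0) in ℝ³ is RL-equivalent to the curve germ t ↦ (t³, t⁵, 0). (This is the conclusion of Case 2 of the classification of the class RVV, combined with the appendix equivalences (t³, t⁵ ± t⁷, 0) ∼ (t³, t⁵, 0).) -/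
/-!
The gaps of the semigroup `⟨3, 5⟩` are `1, 2, 4, 7`. Reparametrizing by
`τ(s) = s + c₁ s² + c₂ s³ + c₃ s⁵`, with `c₁, c₂, c₃` solving a triangular system, kills the
coefficients of `s⁴` and `s⁷` in both coordinates of `γ ∘ τ`. Each coordinate then has the form
`a s³ + b s⁵ + N(s³, s⁵)` with `N` analytic and of order at least two, because every exponent
`≥ 8` lies in `⟨3, 5⟩`. So `γ ∘ τ = Ψ ∘ σ` for an analytic `Ψ` whose linear part is a
transvection, and the local inverse `Φ = Ψ⁻¹` gives the RL-equivalence.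
-/

open Filter

open Polynomial Topology

theorem Polynomial.exists_eq_sum_X_pow_mul_expand {R : Type*} [CommSemiring R] {n : ℕ}
    (hn : 0 < n) (g : R[X]) :
    ∃ h : Fin n → R[X], g = ∑ i : Fin n, X ^ (i : ℕ) * expand R n (h i) := by
  induction g using Polynomial.induction_on' with
  | add p q hp hq =>
    obtain ⟨hp, rfl⟩ := hp
    obtain ⟨hq, rfl⟩ := hq
    exact ⟨hp + hq, by simp [mul_add, Finset.sum_add_distrib]⟩
  | monomial k a =>
    refine ⟨fun i => if (i : ℕ) = k % n then monomial (k / n) a else 0, ?_⟩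
    rw [Finset.sum_eq_single ⟨k % n, Nat.mod_lt k hn⟩
      (fun i _ hi => by simp [Fin.ext_iff] at hi; simp [hi]) (by simp)]
    simp [X_pow_mul_monomial, Nat.div_add_mod']

theorem Polynomial.mk_X_pow_eq_zero {R : Type*} [CommRing R] {n m : ℕ} (h : n ≤ m) :
    Ideal.Quotient.mk (Ideal.span {X ^ n}) (X : R[X]) ^ m = 0 := by
  rw [← map_pow, Ideal.Quotient.eq_zero_iff_mem]
  exact Ideal.mem_span_singleton.2 (pow_dvd_pow X h)

theorem hasFDerivAt_mul_of_eq_zero {E : Type*} [NormedAddCommGroup E] [NormedSpace ℝ E]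
    {f g : E → ℝ} {x : E} (hf : DifferentiableAt ℝ f x) (hg : DifferentiableAt ℝ g x)
    (hf0 : f x = 0) (hg0 : g x = 0) : HasFDerivAt (fun y => f y * g y) (0 : E →L[ℝ] ℝ) x := by
  simpa [hf0, hg0] using hf.hasFDerivAt.fun_mul hg.hasFDerivAt

theorem Polynomial.exists_eval_eq_pow_three_pow_five {p : ℝ[X]} {a b c : ℝ}
    (hp : X ^ 8 ∣ p - (C a * X ^ 3 + C b * X ^ 5 + C c * X ^ 6)) :
    ∃ N : ℝ × ℝ → ℝ, AnalyticAt ℝ N 0 ∧ N 0 = 0 ∧ HasFDerivAt N (0 : ℝ × ℝ →L[ℝ] ℝ) 0 ∧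
      ∀ s, p.eval s = a * s ^ 3 + b * s ^ 5 + N (s ^ 3, s ^ 5) := by
  obtain ⟨g, hg⟩ := hp
  obtain ⟨h, hh⟩ := exists_eq_sum_X_pow_mul_expand (by norm_num : 0 < 3) g
  have hfst : AnalyticAt ℝ (fun v : ℝ × ℝ => v.1) 0 := analyticAt_fst
  have hsnd : AnalyticAt ℝ (fun v : ℝ × ℝ => v.2) 0 := analyticAt_snd
  have heval (q : ℝ[X]) : AnalyticAt ℝ (fun v : ℝ × ℝ => q.eval v.1) 0 :=
    (AnalyticOnNhd.eval_polynomial q _ trivial).comp analyticAt_fst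
  -- `s⁸ g(s) = s⁸ h₀(s³) + s⁹ h₁(s³) + s¹⁰ h₂(s³)` with `s⁸ = x y`, `s⁹ = x³`, `s¹⁰ = y²`
  set A : ℝ × ℝ → ℝ := fun v => c * v.1 + v.2 * (h 0).eval v.1 + v.1 ^ 2 * (h 1).eval v.1
  set B : ℝ × ℝ → ℝ := fun v => v.2 * (h 2).eval v.1
  have hA : AnalyticAt ℝ A 0 := by
    have := heval (h 0); have := heval (h 1); fun_prop
  have hB : AnalyticAt ℝ B 0 := by
    have := heval (h 2); fun_prop
  refine ⟨fun v => v.1 * A v + v.2 * B v, by fun_prop, by simp, ?_, fun s => ?_⟩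
  · simpa using (hasFDerivAt_mul_of_eq_zero (by fun_prop) hA.differentiableAt rfl
      (by simp [A])).fun_add (hasFDerivAt_mul_of_eq_zero (by fun_prop) hB.differentiableAt rfl
      (by simp [B]))
  · have := congrArg (eval s) hg
    simp only [hh, Fin.sum_univ_three, eval_sub, eval_add, eval_mul, eval_pow, eval_C, eval_X,
      expand_eval, Fin.val_zero, Fin.val_one, Fin.val_two] at this
    simp only [A, B]
    linear_combination this

theorem RLEquiv.of_comp_eq {n : ℕ} {γ σ : ℝ → Fin n → ℝ} {Ψ : (Fin n → ℝ) → Fin n → ℝ}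
    {L : (Fin n → ℝ) ≃L[ℝ] (Fin n → ℝ)} {τ : ℝ → ℝ} (hΨ : AnalyticAt ℝ Ψ 0) (hΨ0 : Ψ 0 = 0)
    (hL : HasFDerivAt Ψ (L : (Fin n → ℝ) →L[ℝ] (Fin n → ℝ)) 0) (hτ : AnalyticAt ℝ τ 0)
    (hτ0 : τ 0 = 0) (hτ' : deriv τ 0 ≠ 0) (hσ : Tendsto σ (𝓝 0) (𝓝 0))
    (h : ∀ᶠ t in 𝓝 0, Ψ (σ t) = γ (τ t)) : RLEquiv γ σ := by
  have hS : HasStrictFDerivAt Ψ (L : (Fin n → ℝ) →L[ℝ] (Fin n → ℝ)) 0 :=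
    hL.fderiv ▸ hΨ.hasStrictFDerivAt
  have hΦ := hS.to_localInverse
  rw [hΨ0] at hΦ
  have hΦa : AnalyticAt ℝ (hS.localInverse Ψ L 0) 0 := by
    have := (hS.toOpenPartialHomeomorph Ψ).analyticAt_symm' hS.mem_toOpenPartialHomeomorph_source
      hΨ hL.fderiv
    simpa [hΨ0, HasStrictFDerivAt.localInverse] using this
  refine ⟨hS.localInverse Ψ L 0, τ, hΦa, ?_, ?_, hτ, hτ0, hτ', ?_⟩
  · simpa [hΨ0] using hS.localInverse_apply_image
  · rw [hΦ.hasFDerivAt.fderiv]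
    exact L.symm.bijective
  · filter_upwards [hσ.eventually hS.eventually_left_inverse, h] with t hl ht
    rw [← ht, hl]

def liftPlane (N₁ N₂ : ℝ × ℝ → ℝ) (v : Fin 3 → ℝ) : Fin 3 → ℝ :=
  ![N₁ (v 0, v 1), N₂ (v 0, v 1), 0]

section liftPlane

variable {N₁ N₂ : ℝ × ℝ → ℝ}

theorem analyticAt_liftPlane (h₁ : AnalyticAt ℝ N₁ 0) (h₂ : AnalyticAt ℝ N₂ 0) :
    AnalyticAt ℝ (liftPlane N₁ N₂) 0 := by
  let π : (Fin 3 → ℝ) →L[ℝ] ℝ × ℝ := (ContinuousLinearMap.proj 0).prod (ContinuousLinearMap.proj 1)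
  refine AnalyticAt.pi fun i => ?_
  fin_cases i
  · exact h₁.comp_of_eq (π.analyticAt 0) (map_zero π)
  · exact h₂.comp_of_eq (π.analyticAt 0) (map_zero π)
  · exact analyticAt_const

theorem hasFDerivAt_liftPlane (h₁ : HasFDerivAt N₁ (0 : ℝ × ℝ →L[ℝ] ℝ) 0)
    (h₂ : HasFDerivAt N₂ (0 : ℝ × ℝ →L[ℝ] ℝ) 0) :
    HasFDerivAt (liftPlane N₁ N₂) (0 : (Fin 3 → ℝ) →L[ℝ] Fin 3 → ℝ) 0 := by
  let π : (Fin 3 → ℝ) →L[ℝ] ℝ × ℝ := (ContinuousLinearMap.proj 0).prod (ContinuousLinearMap.proj 1)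
  have hcomp {M : ℝ × ℝ → ℝ} (hM : HasFDerivAt M (0 : ℝ × ℝ →L[ℝ] ℝ) 0) :
      HasFDerivAt (fun v : Fin 3 → ℝ => M (v 0, v 1)) (0 : (Fin 3 → ℝ) →L[ℝ] ℝ) 0 := by
    rw [← ContinuousLinearMap.zero_comp π]
    exact HasFDerivAt.comp 0 (by simpa [Prod.mk_zero_zero] using hM) π.hasFDerivAt
  refine hasFDerivAt_pi'.2 fun i => ?_
  fin_cases i
  · simpa [liftPlane] using hcomp h₁
  · simpa [liftPlane] using hcomp h₂
  · simpa [liftPlane] using hasFDerivAt_const (0 : ℝ) (0 : Fin 3 → ℝ)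

end liftPlane

theorem RLEquiv.of_X_pow_eight_dvd {p₁ p₂ T : ℝ[X]} {a c d : ℝ} (hT : T.eval 0 = 0)
    (hT' : T.derivative.eval 0 ≠ 0)
    (h₁ : X ^ 8 ∣ p₁.comp T - (C 1 * X ^ 3 + C a * X ^ 5 + C c * X ^ 6))
    (h₂ : X ^ 8 ∣ p₂.comp T - (C 0 * X ^ 3 + C 1 * X ^ 5 + C d * X ^ 6)) :
    RLEquiv (fun t => ![p₁.eval t, p₂.eval t, 0]) (fun t => ![t ^ 3, t ^ 5, 0]) := by
  obtain ⟨N₁, hN₁, hN₁0, hN₁', hp₁⟩ := exists_eval_eq_pow_three_pow_five h₁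
  obtain ⟨N₂, hN₂, hN₂0, hN₂', hp₂⟩ := exists_eval_eq_pow_three_pow_five h₂
  let L : (Fin 3 → ℝ) ≃L[ℝ] (Fin 3 → ℝ) :=
    (LinearEquiv.transvection (f := a • LinearMap.proj 1) (v := ![1, 0, 0])
      (by simp)).toContinuousLinearEquiv
  refine RLEquiv.of_comp_eq (Ψ := fun v => L v + liftPlane N₁ N₂ v) (L := L)
    (τ := fun t => T.eval t) ((L.analyticAt 0).add (analyticAt_liftPlane hN₁ hN₂)) ?_
    (by simpa using L.hasFDerivAt.add (hasFDerivAt_liftPlane hN₁' hN₂'))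
    (AnalyticOnNhd.eval_polynomial T 0 trivial) hT (by simpa using hT')
    ((Continuous.tendsto (by fun_prop) 0).trans (by simp))
    (Eventually.of_forall fun t => ?_)
  · ext i
    fin_cases i <;> simp [liftPlane, Prod.mk_zero_zero, hN₁0, hN₂0]
  · ext i
    fin_cases i
    · simp [L, liftPlane, LinearMap.transvection.apply, ← eval_comp, hp₁]
    · simp [L, liftPlane, LinearMap.transvection.apply, ← eval_comp, hp₂]
    · simp [L, liftPlane, LinearMap.transvection.apply]

section

variable (c₁ c₂ c₃ : ℝ)

local notation "T" => (X + C c₁ * X ^ 2 + C c₂ * X ^ 3 + C c₃ * X ^ 5 : ℝ[X])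

set_option maxRecDepth 4000 in
theorem X_pow_eight_dvd_case2_fst {α₁ α₂ : ℝ} (h₄ : α₁ + 3 * c₁ = 0)
    (h₇ : α₂ + 3 * c₃ + 3 * c₂ ^ 2 + 12 * c₁ * c₂ * α₁ + 3 * c₁ ^ 2 * c₂ + 4 * c₁ ^ 3 * α₁ = 0) :
    X ^ 8 ∣ (X ^ 3 + C α₁ * X ^ 4 + C α₂ * X ^ 7).comp T - (C 1 * X ^ 3
      + C (3 * c₂ + 3 * c₁ ^ 2 + 4 * α₁ * c₁) * X ^ 5
      + C (c₁ ^ 3 + 6 * c₁ * c₂ + α₁ * (4 * c₂ + 6 * c₁ ^ 2)) * X ^ 6) := by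
  rw [← Ideal.mem_span_singleton, ← Ideal.Quotient.eq_zero_iff_mem]
  have h₄' := congrArg ((Ideal.Quotient.mk (Ideal.span {(X : ℝ[X]) ^ 8})).comp C) h₄
  have h₇' := congrArg ((Ideal.Quotient.mk (Ideal.span {(X : ℝ[X]) ^ 8})).comp C) h₇
  simp only [add_comp, mul_comp, pow_comp, X_comp, C_comp, map_sub, map_add, map_mul, map_pow,
    map_ofNat, map_zero, map_one, RingHom.comp_apply] at h₄' h₇' ⊢
  ring_nf
  simp only [mk_X_pow_eq_zero, Nat.reduceLeDiff, zero_mul, add_zero]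
  linear_combination (Ideal.Quotient.mk _ X) ^ 4 * h₄' + (Ideal.Quotient.mk _ X) ^ 7 * h₇'

set_option maxRecDepth 4000 in
theorem X_pow_eight_dvd_case2_snd {β : ℝ} (h₇ : β + 5 * c₂ + 10 * c₁ ^ 2 = 0) :
    X ^ 8 ∣ (X ^ 5 + C β * X ^ 7).comp T - (C 0 * X ^ 3 + C 1 * X ^ 5 + C (5 * c₁) * X ^ 6) := by
  rw [← Ideal.mem_span_singleton, ← Ideal.Quotient.eq_zero_iff_mem]
  have h₇' := congrArg ((Ideal.Quotient.mk (Ideal.span {(X : ℝ[X]) ^ 8})).comp C) h₇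
  simp only [add_comp, mul_comp, pow_comp, X_comp, C_comp, map_sub, map_add, map_mul, map_pow,
    map_ofNat, map_zero, map_one, RingHom.comp_apply] at h₇' ⊢
  ring_nf
  simp only [mk_X_pow_eq_zero, Nat.reduceLeDiff, zero_mul, add_zero]
  linear_combination (Ideal.Quotient.mk _ X) ^ 7 * h₇'

end

/-- For all `α₁, α₂, β`, the curve `(t³ + α₁t⁴ + α₂t⁷, t⁵ + βt⁷, 0)` is
RL-equivalent to `(t³, t⁵, 0)`. -/
theorem RLEquiv_RVV_case2 (α₁ α₂ β : ℝ) :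
    RLEquiv (fun t : ℝ => ![t ^ 3 + α₁ * t ^ 4 + α₂ * t ^ 7, t ^ 5 + β * t ^ 7, 0])
      (fun t : ℝ => ![t ^ 3, t ^ 5, 0]) := by
  obtain ⟨c₁, h₄⟩ : ∃ c₁, α₁ + 3 * c₁ = 0 := ⟨-α₁ / 3, by ring⟩
  obtain ⟨c₂, h₇⟩ : ∃ c₂, β + 5 * c₂ + 10 * c₁ ^ 2 = 0 := ⟨-(β + 10 * c₁ ^ 2) / 5, by ring⟩
  obtain ⟨c₃, h₇'⟩ : ∃ c₃,
      α₂ + 3 * c₃ + 3 * c₂ ^ 2 + 12 * c₁ * c₂ * α₁ + 3 * c₁ ^ 2 * c₂ + 4 * c₁ ^ 3 * α₁ = 0 :=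
    ⟨-(α₂ + 3 * c₂ ^ 2 + 12 * c₁ * c₂ * α₁ + 3 * c₁ ^ 2 * c₂ + 4 * c₁ ^ 3 * α₁) / 3, by ring⟩
  simpa using RLEquiv.of_X_pow_eight_dvd (by simp) (by simp)
    (X_pow_eight_dvd_case2_fst c₁ c₂ c₃ h₄ h₇') (X_pow_eight_dvd_case2_snd c₁ c₂ c₃ h₇)
end

section
/- Let x, y, z, u, v, u₂, v₂ be real-analytic functions defined near 0 in ℝ, all vanishing at 0, satisfying the integrality relations of the level-two Kumpera–Rubin Pfaffian system along a curve: y'(t) = u(t)·x'(t), z'(t) = v(t)·x'(t), x'(t) = u₂(t)·u'(t), v'(t) = v₂(t)·u'(t) for all t near 0. Assume u'(0) = 0, u''(0) ≠ 0, and u₂'(0) ≠ 0. Then ord(x) = 3 and ord(y) = 5. -/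
open Filter

/-!
Orders of analytic germs add under multiplication, and integrating raises the order of a germ
vanishing at `0` by one. Since `u'(0) = 0 ≠ u''(0)` and `u₂(0) = 0 ≠ u₂'(0)`, the germs `u'` and
`u₂` have order `1` and `u` has order `2`. Hence `x' = u₂ u'` has order `2`, so `x` has order `3`,
and `y' = u x'` has order `4`, so `y` has order `5`.
-/

theorem AnalyticAt.analyticOrderAt_eq_deriv_add_one {𝕜 E : Type*} [NontriviallyNormedField 𝕜]
    [CharZero 𝕜] [NormedAddCommGroup E] [NormedSpace 𝕜 E] [CompleteSpace E] {f : 𝕜 → E} {z : 𝕜}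
    (hf : AnalyticAt 𝕜 f z) (hf0 : f z = 0) :
    analyticOrderAt f z = analyticOrderAt (deriv f) z + 1 := by
  simpa [hf0] using hf.analyticOrderAt_deriv_add_one.symm

theorem ord_eq_of_analyticOrderAt_eq {f : ℝ → ℝ} (hf : AnalyticAt ℝ f 0) {n : ℕ}
    (h : analyticOrderAt f 0 = n) : ord f = n := by
  obtain ⟨hlt, hn⟩ := (analyticOrderAt_eq_nat_iff_iteratedDeriv_eq_zero hf).mp h
  exact le_antisymm (Nat.sInf_le hn)
    (le_csInf ⟨n, hn⟩ fun m hm => not_lt.mp fun hmn => hm (hlt m hmn))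

theorem ord_of_RVV_integral_curve_general (x y u u₂ : ℝ → ℝ)
    (hx : AnalyticAt ℝ x 0) (hy : AnalyticAt ℝ y 0)
    (hu : AnalyticAt ℝ u 0)
    (hu₂ : AnalyticAt ℝ u₂ 0)
    (hx0 : x 0 = 0) (hy0 : y 0 = 0)
    (hu0 : u 0 = 0) (hu₂0 : u₂ 0 = 0)
    (h1 : ∀ᶠ t in nhds (0 : ℝ), deriv y t = u t * deriv x t)
    (h3 : ∀ᶠ t in nhds (0 : ℝ), deriv x t = u₂ t * deriv u t)
    (hu' : deriv u 0 = 0) (hu'' : iteratedDeriv 2 u 0 ≠ 0)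
    (hu₂' : deriv u₂ 0 ≠ 0) :
    ord x = 3 ∧ ord y = 5 := by
  have ord_u' : analyticOrderAt (deriv u) 0 = 1 :=
    hu.deriv.analyticOrderAt_eq_one_of_zero_deriv_ne_zero hu'
      (by simpa [iteratedDeriv_eq_iterate] using hu'')
  have ord_u : analyticOrderAt u 0 = 2 := by
    rw [hu.analyticOrderAt_eq_deriv_add_one hu0, ord_u']; rfl
  have ord_u₂ : analyticOrderAt u₂ 0 = 1 :=
    hu₂.analyticOrderAt_eq_one_of_zero_deriv_ne_zero hu₂0 hu₂'
  have ord_x' : analyticOrderAt (deriv x) 0 = 2 := by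
    rw [analyticOrderAt_congr h3, ← Pi.mul_def, analyticOrderAt_mul hu₂ hu.deriv, ord_u₂, ord_u']
    rfl
  have ord_y' : analyticOrderAt (deriv y) 0 = 4 := by
    rw [analyticOrderAt_congr h1, ← Pi.mul_def, analyticOrderAt_mul hu hx.deriv, ord_u, ord_x']
    rfl
  refine ⟨ord_eq_of_analyticOrderAt_eq hx ?_, ord_eq_of_analyticOrderAt_eq hy ?_⟩
  · rw [hx.analyticOrderAt_eq_deriv_add_one hx0, ord_x']; rfl
  · rw [hy.analyticOrderAt_eq_deriv_add_one hy0, ord_y']; rfl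

/-- Orders of the base components of an integral curve of the level-two
Kumpera–Rubin Pfaffian system in the class `RVV`. -/
theorem ord_of_RVV_integral_curve (x y z u v u₂ v₂ : ℝ → ℝ)
    (hx : AnalyticAt ℝ x 0) (hy : AnalyticAt ℝ y 0) (hz : AnalyticAt ℝ z 0)
    (hu : AnalyticAt ℝ u 0) (hv : AnalyticAt ℝ v 0)
    (hu₂ : AnalyticAt ℝ u₂ 0) (hv₂ : AnalyticAt ℝ v₂ 0)
    (hx0 : x 0 = 0) (hy0 : y 0 = 0) (hz0 : z 0 = 0)
    (hu0 : u 0 = 0) (hv0 : v 0 = 0) (hu₂0 : u₂ 0 = 0) (hv₂0 : v₂ 0 = 0)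
    (h1 : ∀ᶠ t in nhds (0 : ℝ), deriv y t = u t * deriv x t)
    (h2 : ∀ᶠ t in nhds (0 : ℝ), deriv z t = v t * deriv x t)
    (h3 : ∀ᶠ t in nhds (0 : ℝ), deriv x t = u₂ t * deriv u t)
    (h4 : ∀ᶠ t in nhds (0 : ℝ), deriv v t = v₂ t * deriv u t)
    (hu' : deriv u 0 = 0) (hu'' : iteratedDeriv 2 u 0 ≠ 0)
    (hu₂' : deriv u₂ 0 ≠ 0) :
    ord x = 3 ∧ ord y = 5 :=
  ord_of_RVV_integral_curve_general x y u u₂ hx hy hu hu₂ hx0 hy0 hu0 hu₂0 h1 h3 hu' hu'' hu₂'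
end
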